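/- The function F(κ)/(1 − F(κ)/κ − F(κ)²) is strictly positive for all κ > 0, where F(κ) = I₁(κ)/I₀(κ). Equivalently, the von Mises Fisher information component g_{κκ} = 1 − F(κ)/κ − F(κ)² is strictly positive for κ > 0. -/

import Mathlib

/-- Modified Bessel function of the first kind of integer order (integral representation). -/
noncomputable def besselI (n : ℕ) (x : ℝ) : ℝ :=
  (1 / Real.pi) * ∫ t in (0:ℝ)..Real.pi, Real.exp (x * Real.cos t) * Real.cos (n * t)

/-- Ratio of modified Bessel functions `F(κ) = I₁(κ)/I₀(κ)`. -/
noncomputable def besselRatio (κ : ℝ) : ℝ := besselI 1 κ / besselI 0 κ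

/-!
Write `⟨f⟩ = ∫₀^π e^{κ cos t} f(t) dt` (`vonMisesIntegral κ f`), so that `F = ⟨cos⟩ / ⟨1⟩`.
Integrating `d/dt (e^{κ cos t} sin t) = e^{κ cos t} (cos t - κ sin² t)` over `[0, π]` gives
`⟨cos⟩ = κ ⟨sin²⟩`, hence `F / κ = ⟨sin²⟩ / ⟨1⟩` and, using `cos² = 1 - sin²`,
`1 - F / κ - F² = ⟨(cos - F)²⟩ / ⟨1⟩`, the variance of `cos` under the von Mises weight.
It is positive because `cos` is not constant on `[0, π]`, and `F > 0` because `⟨sin²⟩ > 0`.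
-/

open Real Set

noncomputable def vonMisesIntegral (κ : ℝ) (f : ℝ → ℝ) : ℝ :=
  ∫ t in (0 : ℝ)..π, exp (κ * cos t) * f t

namespace vonMisesIntegral

variable (κ : ℝ)

theorem pos {f : ℝ → ℝ} (hf : Continuous f) (hf_nonneg : ∀ t, 0 ≤ f t) {c : ℝ}
    (hc : c ∈ Icc 0 π) (hfc : 0 < f c) : 0 < vonMisesIntegral κ f :=
  intervalIntegral.integral_pos pi_pos (by fun_prop)
    (fun t _ => mul_nonneg (exp_pos _).le (hf_nonneg t)) ⟨c, hc, mul_pos (exp_pos _) hfc⟩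

theorem one_pos : 0 < vonMisesIntegral κ 1 :=
  pos κ continuous_const (fun _ => zero_le_one) (left_mem_Icc.2 pi_pos.le) zero_lt_one

theorem sin_sq_pos : 0 < vonMisesIntegral κ (fun t => sin t ^ 2) := by
  refine pos κ (by fun_prop) (fun t => sq_nonneg _) (c := π / 2) ?_ (by simp)
  exact ⟨by linarith [pi_pos], by linarith [pi_pos]⟩

theorem sq_cos_sub_pos (m : ℝ) : 0 < vonMisesIntegral κ (fun t => (cos t - m) ^ 2) := by
  obtain hm | hm := ne_or_eq m 1
  · exact pos κ (by fun_prop) (fun t => sq_nonneg _) (left_mem_Icc.2 pi_pos.le)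
      (by simpa using sq_pos_of_ne_zero (sub_ne_zero.2 hm.symm))
  · exact pos κ (by fun_prop) (fun t => sq_nonneg _) (right_mem_Icc.2 pi_pos.le)
      (by subst hm; norm_num)

theorem cos_eq_mul_sin_sq :
    vonMisesIntegral κ cos = κ * vonMisesIntegral κ (fun t => sin t ^ 2) := by
  have hderiv : ∀ t ∈ uIcc 0 π, HasDerivAt (fun t => exp (κ * cos t) * sin t)
      (exp (κ * cos t) * cos t - κ * (exp (κ * cos t) * sin t ^ 2)) t := by
    intro t _
    exact (((hasDerivAt_cos t).const_mul κ).exp.mul (hasDerivAt_sin t)).congr_deriv (by ring)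
  have hftc := intervalIntegral.integral_eq_sub_of_hasDerivAt hderiv
    (Continuous.intervalIntegrable (by fun_prop) _ _)
  rw [intervalIntegral.integral_sub (Continuous.intervalIntegrable (by fun_prop) _ _)
    (Continuous.intervalIntegrable (by fun_prop) _ _), intervalIntegral.integral_const_mul] at hftc
  simpa [vonMisesIntegral, sub_eq_zero] using hftc

theorem sq_cos_sub_eq (m : ℝ) : vonMisesIntegral κ (fun t => (cos t - m) ^ 2) =
    (1 + m ^ 2) * vonMisesIntegral κ 1 - vonMisesIntegral κ (fun t => sin t ^ 2)
      - 2 * m * vonMisesIntegral κ cos := by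
  have hexpand : ∀ t, exp (κ * cos t) * (cos t - m) ^ 2 =
      (1 + m ^ 2) * exp (κ * cos t) - exp (κ * cos t) * sin t ^ 2
        - 2 * m * (exp (κ * cos t) * cos t) := by
    intro t
    linear_combination exp (κ * cos t) * sin_sq t
  simp only [vonMisesIntegral, hexpand, Pi.one_apply, mul_one]
  rw [intervalIntegral.integral_sub, intervalIntegral.integral_sub,
    intervalIntegral.integral_const_mul, intervalIntegral.integral_const_mul]
  all_goals (apply Continuous.intervalIntegrable; fun_prop)

end vonMisesIntegral

theorem besselI_eq (n : ℕ) (κ : ℝ) :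
    besselI n κ = π⁻¹ * vonMisesIntegral κ (fun t => cos (n * t)) := by
  rw [besselI, one_div, vonMisesIntegral]

theorem besselRatio_eq (κ : ℝ) :
    besselRatio κ = vonMisesIntegral κ cos / vonMisesIntegral κ 1 := by
  rw [besselRatio, besselI_eq, besselI_eq, mul_div_mul_left _ _ (inv_ne_zero pi_ne_zero)]
  simp [Pi.one_def]

theorem besselRatio_pos {κ : ℝ} (hκ : 0 < κ) : 0 < besselRatio κ := by
  rw [besselRatio_eq, vonMisesIntegral.cos_eq_mul_sin_sq]
  have := vonMisesIntegral.sin_sq_pos κ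
  have := vonMisesIntegral.one_pos κ
  positivity

theorem one_sub_besselRatio_div_sub_sq {κ : ℝ} (hκ : κ ≠ 0) :
    1 - besselRatio κ / κ - besselRatio κ ^ 2 =
      vonMisesIntegral κ (fun t => (cos t - besselRatio κ) ^ 2) / vonMisesIntegral κ 1 := by
  have hA := (vonMisesIntegral.one_pos κ).ne'
  rw [vonMisesIntegral.sq_cos_sub_eq, besselRatio_eq, vonMisesIntegral.cos_eq_mul_sin_sq]
  field_simp
  ring

/-- The von Mises Fisher information component `g_{κκ} = 1 − F(κ)/κ − F(κ)²` is
strictly positive for all `κ > 0`, and hence so is `F(κ)/(1 − F(κ)/κ − F(κ)²)`. -/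
theorem vonMises_gkk_pos (κ : ℝ) (hκ : 0 < κ) :
    0 < 1 - besselRatio κ / κ - (besselRatio κ) ^ 2 ∧
    0 < besselRatio κ / (1 - besselRatio κ / κ - (besselRatio κ) ^ 2) := by
  have hg : 0 < 1 - besselRatio κ / κ - besselRatio κ ^ 2 := by
    rw [one_sub_besselRatio_div_sub_sq hκ.ne']
    exact div_pos (vonMisesIntegral.sq_cos_sub_pos κ _) (vonMisesIntegral.one_pos κ)
  exact ⟨hg, div_pos (besselRatio_pos hκ) hg⟩
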